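/- Let n ≥ 2 and let Hⁿ = {x ∈ ℝⁿ : xₙ > 0}. For distinct x,y ∈ Hⁿ, the equality tan(v_{Hⁿ}(x,y)) = sinh(ρ_{Hⁿ}(x,y)/2) holds if and only if the line through x and y is perpendicular to the boundary ∂Hⁿ, i.e. if and only if x and y differ only in their last coordinate. -/

import Mathlib

open EuclideanGeometry Real Set

/-- The visual angle metric on a domain `G ⊊ ℝⁿ`:
`v_G(x,y) = sup_{z ∈ ∂G} ∠(x,z,y)`. -/
noncomputable def visualAngle {n : ℕ} (G : Set (EuclideanSpace ℝ (Fin n)))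
    (x y : EuclideanSpace ℝ (Fin n)) : ℝ :=
  sSup ((fun z => ∠ x z y) '' frontier G)

/-- Inverse hyperbolic cosine. -/
noncomputable def arcosh (t : ℝ) : ℝ := Real.log (t + Real.sqrt (t ^ 2 - 1))

/-- The upper half space `Hⁿ = {x ∈ ℝⁿ : xₙ > 0}` with `n = m + 2 ≥ 2`. -/
def upperHalf (m : ℕ) : Set (EuclideanSpace ℝ (Fin (m + 2))) :=
  {x | 0 < x (Fin.last (m + 1))}

/-- The hyperbolic metric of the upper half space:
`ρ_{Hⁿ}(x,y) = arcosh(1 + |x−y|²/(2 xₙ yₙ))`. -/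
noncomputable def rhoHalf {m : ℕ} (x y : EuclideanSpace ℝ (Fin (m + 2))) : ℝ :=
  _root_.arcosh (1 + dist x y ^ 2 / (2 * x (Fin.last (m + 1)) * y (Fin.last (m + 1))))

open scoped RealInnerProductSpace

/-! Write `a, b` for the heights of `x, y`. Both sides are computed through tangents:
`sinh (ρ/2) = |x - y| / (2√(ab))`, and for a boundary point `z` with `⟪x - z, y - z⟫ > 0` the
angle `∠ x z y` is the arctangent of `√(|x - z|²|y - z|² - ⟪x - z, y - z⟫²) / ⟪x - z, y - z⟫`.
If `x, y` lie on a common normal and `r` is the distance from `z` to it, this quotient is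
`|a - b| r / (r² + ab) ≤ |a - b| / (2√(ab))` by AM-GM, with equality at `r = √(ab)`; so the visual
angle is exactly `arctan (sinh (ρ/2))`. Otherwise a suitable boundary point on the line through the
feet of `x` and `y` sees `x, y` under a strictly larger angle. -/

lemma sinh_half_arcosh {t : ℝ} (ht : 1 ≤ t) : sinh (Real.arcosh t / 2) = √((t - 1) / 2) := by
  have hcosh : t = 1 + 2 * sinh (Real.arcosh t / 2) ^ 2 := by
    conv_lhs => rw [← cosh_arcosh ht, ← mul_div_cancel₀ (Real.arcosh t) two_ne_zero,
      cosh_two_mul, cosh_sq]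
    ring
  rw [show (t - 1) / 2 = sinh (Real.arcosh t / 2) ^ 2 by linarith,
    sqrt_sq (sinh_nonneg_iff.2 (by linarith [arcosh_nonneg ht]))]

lemma sinh_half_arcosh_one_add_div {a b d : ℝ} (ha : 0 < a) (hb : 0 < b) (hd : 0 ≤ d) :
    sinh (Real.arcosh (1 + d ^ 2 / (2 * a * b)) / 2) = d / (2 * √(a * b)) := by
  rw [sinh_half_arcosh (le_add_of_nonneg_right (by positivity)),
    ← sqrt_sq (by positivity : 0 ≤ d / (2 * √(a * b)))]
  congr 1
  rw [div_pow, mul_pow, sq_sqrt (by positivity)]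
  field_simp
  ring

lemma tan_eq_iff_eq_arctan {v s : ℝ} (hv₀ : 0 ≤ v) (hvπ : v ≤ π) (hs : 0 < s) :
    tan v = s ↔ v = arctan s := by
  refine ⟨fun h => ?_, fun h => h ▸ tan_arctan s⟩
  rcases lt_or_ge v (π / 2) with hv | hv
  · rw [← h, arctan_tan (by linarith [pi_pos]) hv]
  · have : tan v ≤ 0 := by
      rw [← tan_sub_pi]
      exact tan_nonpos_of_nonpos_of_neg_pi_div_two_le (by linarith) (by linarith)
    linarith

lemma abs_sub_mul_div_le {a b : ℝ} (ha : 0 < a) (hb : 0 < b) (r : ℝ) :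
    |a - b| * r / (r ^ 2 + a * b) ≤ |a - b| / (2 * √(a * b)) := by
  have hab := sq_sqrt (mul_pos ha hb).le
  rw [div_le_div_iff₀ (by positivity) (by positivity)]
  linear_combination mul_nonneg (abs_nonneg (a - b)) (sq_nonneg (r - √(a * b))) + |a - b| * hab

/- Put `x = (0, a)`, `y = (c, b)` in a plane orthogonal to the boundary. The boundary point `(t, 0)`
sees `x, y` under an acute angle with tangent `|ac + t(b - a)| / (t² - tc + ab)`, and the inequality
says that this exceeds `√(c² + (a - b)²) / (2√(ab))`. For `a < b` the witness is the root of
`t (t - c) = ab` beyond `y`; for `a = b` it is the foot of `x`. -/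
lemma exists_quadratic_mul_sq_lt {a b c : ℝ} (ha : 0 < a) (hb : 0 < b) (hc : 0 < c) :
    ∃ t, 0 < t ^ 2 - t * c + a * b ∧
      (c ^ 2 + (a - b) ^ 2) * (t ^ 2 - t * c + a * b) ^ 2
        < 4 * a * b * (a * c + t * (b - a)) ^ 2 := by
  wlog hab : a ≤ b generalizing a b
  · obtain ⟨t, hP, hlt⟩ := this hb ha (le_of_not_ge hab)
    refine ⟨c - t, ?_, ?_⟩
    · convert hP using 1; ring
    · convert hlt using 1 <;> ring
  rcases hab.lt_or_eq with hab | rfl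
  · set r := √(c ^ 2 + 4 * a * b)
    have hr : r ^ 2 = c ^ 2 + 4 * a * b := sq_sqrt (by positivity)
    have hcr : c < r := by nlinarith [sqrt_nonneg (c ^ 2 + 4 * a * b)]
    set t := (c + r) / 2
    have ht : t ^ 2 - t * c = a * b := by linear_combination hr / 4
    have key : (a * c + t * (b - a)) ^ 2 - a * b * (c ^ 2 + (a - b) ^ 2)
        = c * (b - a) * ((a + b) * t - a * c) := by linear_combination (b - a) ^ 2 * ht
    have htc : c < t := by simp only [t]; linarith
    have hpos : 0 < c * (b - a) * ((a + b) * t - a * c) :=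
      mul_pos (mul_pos hc (sub_pos.2 hab)) (by nlinarith)
    refine ⟨t, by nlinarith, ?_⟩
    rw [ht]
    nlinarith [mul_pos (mul_pos ha hb) hpos]
  · refine ⟨0, by simp [ha], ?_⟩
    nlinarith [mul_pos (pow_pos ha 4) (pow_pos hc 2)]

namespace InnerProductGeometry

variable {V : Type*} [NormedAddCommGroup V] [InnerProductSpace ℝ V] {e f p q u w : V} {a b : ℝ}

theorem angle_eq_arctan_of_inner_pos {x y : V} (h : 0 < ⟪x, y⟫) :
    angle x y = arctan (√(⟪x, x⟫ * ⟪y, y⟫ - ⟪x, y⟫ * ⟪x, y⟫) / ⟪x, y⟫) := by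
  have hx : x ≠ 0 := by rintro rfl; simp at h
  have hy : y ≠ 0 := by rintro rfl; simp at h
  have hlt : angle x y < π / 2 := Real.arccos_lt_pi_div_two.2 (by positivity)
  rw [← sin_angle_mul_norm_mul_norm, ← cos_angle_mul_norm_mul_norm,
    mul_div_mul_right _ _ (by positivity), ← tan_eq_sin_div_cos,
    arctan_tan (by linarith [angle_nonneg x y, pi_pos]) hlt]

lemma inner_add_smul_add_smul (he : ‖e‖ = 1) (hu : ⟪u, e⟫ = 0) (hw : ⟪w, e⟫ = 0) (a b : ℝ) :
    ⟪u + a • e, w + b • e⟫ = ⟪u, w⟫ + a * b := by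
  have hee : ⟪e, e⟫ = 1 := by rw [real_inner_self_eq_norm_sq, he, one_pow]
  simp only [inner_add_left, inner_add_right, real_inner_smul_left, real_inner_smul_right,
    real_inner_comm w e, hu, hw, hee]
  ring

lemma inner_add_smul_self (he : ‖e‖ = 1) (hp : ⟪p, e⟫ = 0) (a : ℝ) : ⟪p + a • e, e⟫ = a := by
  rw [inner_add_left, hp, real_inner_smul_left, real_inner_self_eq_norm_sq, he]
  ring

lemma angle_add_smul_add_smul_self (he : ‖e‖ = 1) (hu : ⟪u, e⟫ = 0) (ha : 0 < a) (hb : 0 < b) :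
    angle (u + a • e) (u + b • e) = arctan (|a - b| * ‖u‖ / (‖u‖ ^ 2 + a * b)) := by
  have hP : ⟪u + a • e, u + b • e⟫ = ‖u‖ ^ 2 + a * b := by
    rw [inner_add_smul_add_smul he hu hu, real_inner_self_eq_norm_sq]
  rw [angle_eq_arctan_of_inner_pos (hP ▸ by positivity), hP, inner_add_smul_add_smul he hu hu,
    inner_add_smul_add_smul he hu hu, real_inner_self_eq_norm_sq,
    show (‖u‖ ^ 2 + a * a) * (‖u‖ ^ 2 + b * b) - (‖u‖ ^ 2 + a * b) * (‖u‖ ^ 2 + a * b)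
      = (|a - b| * ‖u‖) ^ 2 by rw [mul_pow, sq_abs]; ring,
    sqrt_sq (by positivity)]

lemma angle_smul_add_smul_smul_add_smul (he : ‖e‖ = 1) (hf : ‖f‖ = 1) (hfe : ⟪f, e⟫ = 0)
    {α β : ℝ} (hP : 0 < α * β + a * b) :
    angle (α • f + a • e) (β • f + b • e) = arctan (|α * b - β * a| / (α * β + a * b)) := by
  have hγf : ∀ γ : ℝ, ⟪γ • f, e⟫ = 0 := fun γ => by rw [real_inner_smul_left, hfe, mul_zero]
  have hinner : ∀ γ δ c d : ℝ, ⟪γ • f + c • e, δ • f + d • e⟫ = γ * δ + c * d := by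
    intro γ δ c d
    rw [inner_add_smul_add_smul he (hγf γ) (hγf δ), real_inner_smul_left, real_inner_smul_right,
      real_inner_self_eq_norm_sq, hf]
    ring
  rw [angle_eq_arctan_of_inner_pos (by rwa [hinner]), hinner, hinner, hinner,
    show (α * α + a * a) * (β * β + b * b) - (α * β + a * b) * (α * β + a * b)
      = |α * b - β * a| ^ 2 by rw [sq_abs]; ring,
    sqrt_sq (abs_nonneg _)]

lemma dist_add_smul_add_smul_self (he : ‖e‖ = 1) (p : V) (a b : ℝ) :
    dist (p + a • e) (p + b • e) = |a - b| := by
  rw [dist_eq_norm, add_sub_add_left_eq_sub, ← sub_smul, norm_smul, he, mul_one, norm_eq_abs]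

lemma dist_add_smul_add_smul_sq (he : ‖e‖ = 1) (hp : ⟪p, e⟫ = 0) (hq : ⟪q, e⟫ = 0) (a b : ℝ) :
    dist (p + a • e) (q + b • e) ^ 2 = ‖p - q‖ ^ 2 + (a - b) ^ 2 := by
  have hpq : ⟪p - q, e⟫ = 0 := by rw [inner_sub_left, hp, hq, sub_zero]
  rw [dist_eq_norm, ← real_inner_self_eq_norm_sq, add_sub_add_comm, ← sub_smul,
    inner_add_smul_add_smul he hpq hpq, real_inner_self_eq_norm_sq]
  ring

end InnerProductGeometry

namespace EuclideanGeometry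

open InnerProductGeometry

variable {V : Type*} [NormedAddCommGroup V] [InnerProductSpace ℝ V] {e f p q z : V} {a b : ℝ}

theorem angle_le_arctan_of_vertical (he : ‖e‖ = 1) (hp : ⟪p, e⟫ = 0) (hz : ⟪z, e⟫ = 0)
    (ha : 0 < a) (hb : 0 < b) :
    ∠ (p + a • e) z (p + b • e) ≤ arctan (dist (p + a • e) (p + b • e) / (2 * √(a * b))) := by
  have hpz : ⟪p - z, e⟫ = 0 := by rw [inner_sub_left, hp, hz, sub_zero]
  rw [dist_add_smul_add_smul_self he, EuclideanGeometry.angle, vsub_eq_sub, vsub_eq_sub,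
    add_sub_right_comm, add_sub_right_comm, angle_add_smul_add_smul_self he hpz ha hb]
  exact arctan_strictMono.monotone (abs_sub_mul_div_le ha hb _)

theorem angle_eq_arctan_of_vertical (he : ‖e‖ = 1) (hf : ‖f‖ = 1) (hfe : ⟪f, e⟫ = 0)
    (ha : 0 < a) (hb : 0 < b) (p : V) :
    ∠ (p + a • e) (p - √(a * b) • f) (p + b • e)
      = arctan (dist (p + a • e) (p + b • e) / (2 * √(a * b))) := by
  have hab := sq_sqrt (mul_pos ha hb).le
  have hu : ⟪√(a * b) • f, e⟫ = 0 := by rw [real_inner_smul_left, hfe, mul_zero]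
  rw [dist_add_smul_add_smul_self he, EuclideanGeometry.angle, vsub_eq_sub, vsub_eq_sub,
    add_sub_sub_cancel, add_sub_sub_cancel, add_comm (a • e), add_comm (b • e),
    angle_add_smul_add_smul_self he hu ha hb, norm_smul, hf, mul_one, norm_eq_abs,
    abs_of_nonneg (sqrt_nonneg _), hab]
  congr 1
  field_simp
  linear_combination (2 * |a - b|) * hab

theorem exists_arctan_lt_angle (he : ‖e‖ = 1) (hp : ⟪p, e⟫ = 0) (hq : ⟪q, e⟫ = 0) (hpq : p ≠ q)
    (ha : 0 < a) (hb : 0 < b) :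
    ∃ z, ⟪z, e⟫ = 0 ∧
      arctan (dist (p + a • e) (q + b • e) / (2 * √(a * b))) < ∠ (p + a • e) z (q + b • e) := by
  set c := ‖q - p‖
  have hc : 0 < c := norm_pos_iff.2 (sub_ne_zero.2 hpq.symm)
  set f := c⁻¹ • (q - p)
  have hf : ‖f‖ = 1 := by rw [norm_smul, norm_inv, norm_norm, inv_mul_cancel₀ hc.ne']
  have hfe : ⟪f, e⟫ = 0 := by rw [real_inner_smul_left, inner_sub_left, hp, hq]; simp
  have hqp : q - p = c • f := by rw [smul_inv_smul₀ hc.ne']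
  obtain ⟨t, hP, hlt⟩ := exists_quadratic_mul_sq_lt ha hb hc
  refine ⟨p + t • f, by rw [inner_add_left, hp, real_inner_smul_left, hfe]; simp, ?_⟩
  have hx : p + a • e - (p + t • f) = (-t) • f + a • e := by module
  have hy : q + b • e - (p + t • f) = (c - t) • f + b • e := by
    rw [← sub_add_cancel q p, hqp]; module
  rw [EuclideanGeometry.angle, vsub_eq_sub, vsub_eq_sub, hx, hy,
    angle_smul_add_smul_smul_add_smul he hf hfe (by linear_combination hP)]
  refine arctan_strictMono ?_
  rw [div_lt_div_iff₀ (by positivity) (by linear_combination hP)]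
  refine lt_of_pow_lt_pow_left₀ 2 (by positivity) ?_
  rw [mul_pow, mul_pow, dist_add_smul_add_smul_sq he hp hq, mul_pow, sq_abs,
    sq_sqrt (by positivity), ← norm_neg, neg_sub]
  calc _ = (c ^ 2 + (a - b) ^ 2) * (t ^ 2 - t * c + a * b) ^ 2 := by ring
    _ < 4 * a * b * (a * c + t * (b - a)) ^ 2 := hlt
    _ = _ := by ring

end EuclideanGeometry

section VisualAngle

variable {n : ℕ} {G : Set (EuclideanSpace ℝ (Fin n))} {x y z : EuclideanSpace ℝ (Fin n)}

lemma bddAbove_angle_image (S : Set (EuclideanSpace ℝ (Fin n))) (x y : EuclideanSpace ℝ (Fin n)) :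
    BddAbove ((fun z => ∠ x z y) '' S) :=
  ⟨π, by rintro _ ⟨z, -, rfl⟩; exact angle_le_pi _ _ _⟩

lemma visualAngle_nonneg : 0 ≤ visualAngle G x y :=
  Real.sSup_nonneg (by rintro _ ⟨z, -, rfl⟩; exact angle_nonneg _ _ _)

lemma visualAngle_le_pi : visualAngle G x y ≤ π :=
  Real.sSup_le (by rintro _ ⟨z, -, rfl⟩; exact angle_le_pi _ _ _) pi_pos.le

lemma angle_le_visualAngle (hz : z ∈ frontier G) : ∠ x z y ≤ visualAngle G x y :=
  le_csSup (bddAbove_angle_image _ x y) ⟨z, hz, rfl⟩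

end VisualAngle

section UpperHalf

open InnerProductGeometry

variable {m : ℕ}

noncomputable def upperNormal (m : ℕ) : EuclideanSpace ℝ (Fin (m + 2)) :=
  EuclideanSpace.single (Fin.last (m + 1)) 1

lemma norm_upperNormal : ‖upperNormal m‖ = 1 := by simp [upperNormal]

lemma inner_upperNormal (x : EuclideanSpace ℝ (Fin (m + 2))) :
    ⟪x, upperNormal m⟫ = x (Fin.last (m + 1)) := by
  simp [upperNormal, EuclideanSpace.inner_single_right]

lemma frontier_upperHalf (m : ℕ) : frontier (upperHalf m) = {z | ⟪z, upperNormal m⟫ = 0} := by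
  have hsurj : Function.Surjective (EuclideanSpace.proj (𝕜 := ℝ) (Fin.last (m + 1))) :=
    fun r => ⟨EuclideanSpace.single (Fin.last (m + 1)) r, by simp⟩
  have hopen := (EuclideanSpace.proj (𝕜 := ℝ) (Fin.last (m + 1))).isOpenMap hsurj
  rw [show upperHalf m = EuclideanSpace.proj (Fin.last (m + 1)) ⁻¹' Ioi 0 from rfl,
    ← hopen.preimage_frontier_eq_frontier_preimage (EuclideanSpace.proj _).continuous,
    frontier_Ioi]
  ext z
  simp [inner_upperNormal]

lemma exists_add_smul_upperNormal (x : EuclideanSpace ℝ (Fin (m + 2))) :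
    ∃ (p : EuclideanSpace ℝ (Fin (m + 2))) (a : ℝ),
      ⟪p, upperNormal m⟫ = 0 ∧ x = p + a • upperNormal m :=
  ⟨x - x (Fin.last (m + 1)) • upperNormal m, x (Fin.last (m + 1)),
    by simp [inner_sub_left, real_inner_smul_left, inner_upperNormal, norm_upperNormal], by simp⟩

lemma add_smul_upperNormal_apply_last {p : EuclideanSpace ℝ (Fin (m + 2))}
    (hp : ⟪p, upperNormal m⟫ = 0) (a : ℝ) : (p + a • upperNormal m) (Fin.last (m + 1)) = a := by
  rw [← inner_upperNormal, inner_add_smul_self norm_upperNormal hp]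

lemma add_smul_upperNormal_apply_eq_iff {p q : EuclideanSpace ℝ (Fin (m + 2))}
    (hp : ⟪p, upperNormal m⟫ = 0) (hq : ⟪q, upperNormal m⟫ = 0) (a b : ℝ) :
    (∀ i, i ≠ Fin.last (m + 1) → (p + a • upperNormal m) i = (q + b • upperNormal m) i) ↔
      p = q := by
  rw [inner_upperNormal] at hp hq
  refine ⟨fun h => ?_, by rintro rfl i hi; simp [upperNormal, hi]⟩
  ext i
  by_cases hi : i = Fin.last (m + 1)
  · rw [hi, hp, hq]
  · simpa [upperNormal, hi] using h i hi

theorem visualAngle_upperHalf_eq_arctan_iff {x y : EuclideanSpace ℝ (Fin (m + 2))}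
    (hx : x ∈ upperHalf m) (hy : y ∈ upperHalf m) :
    visualAngle (upperHalf m) x y
        = arctan (dist x y / (2 * √(x (Fin.last (m + 1)) * y (Fin.last (m + 1))))) ↔
      ∀ i, i ≠ Fin.last (m + 1) → x i = y i := by
  obtain ⟨p, a, hp, rfl⟩ := exists_add_smul_upperNormal x
  obtain ⟨q, b, hq, rfl⟩ := exists_add_smul_upperNormal y
  rw [add_smul_upperNormal_apply_eq_iff hp hq]
  have ha : 0 < a := add_smul_upperNormal_apply_last hp a ▸ hx
  have hb : 0 < b := add_smul_upperNormal_apply_last hq b ▸ hy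
  rw [add_smul_upperNormal_apply_last hp, add_smul_upperNormal_apply_last hq]
  constructor
  · intro h
    by_contra hpq
    obtain ⟨z, hz, hlt⟩ := exists_arctan_lt_angle norm_upperNormal hp hq hpq ha hb
    exact hlt.not_ge (h ▸ angle_le_visualAngle (by rwa [frontier_upperHalf]))
  · rintro rfl
    set f : EuclideanSpace ℝ (Fin (m + 2)) := EuclideanSpace.single 0 1
    have hf : ‖f‖ = 1 := by simp [f]
    have hfe : ⟪f, upperNormal m⟫ = 0 := by simp [f, inner_upperNormal]
    refine IsGreatest.csSup_eq ⟨⟨p - √(a * b) • f, ?_,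
      angle_eq_arctan_of_vertical norm_upperNormal hf hfe ha hb p⟩, ?_⟩
    · rw [frontier_upperHalf, Set.mem_ofPred_eq, inner_sub_left, hp, real_inner_smul_left, hfe]
      simp
    · rintro _ ⟨z, hz, rfl⟩
      rw [frontier_upperHalf] at hz
      exact angle_le_arctan_of_vertical norm_upperNormal hp hz ha hb

end UpperHalf

theorem stmt8 (m : ℕ) :
    ∀ x ∈ upperHalf m, ∀ y ∈ upperHalf m, x ≠ y →
      (Real.tan (visualAngle (upperHalf m) x y) = Real.sinh (rhoHalf x y / 2) ↔
        ∀ i : Fin (m + 2), i ≠ Fin.last (m + 1) → x i = y i) := by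
  intro x hx y hy hxy
  have hρ : sinh (rhoHalf x y / 2)
      = dist x y / (2 * √(x (Fin.last (m + 1)) * y (Fin.last (m + 1)))) :=
    sinh_half_arcosh_one_add_div hx hy dist_nonneg
  have hs : 0 < dist x y / (2 * √(x (Fin.last (m + 1)) * y (Fin.last (m + 1)))) :=
    div_pos (dist_pos.2 hxy) (mul_pos two_pos (sqrt_pos.2 (mul_pos hx hy)))
  rw [hρ, tan_eq_iff_eq_arctan visualAngle_nonneg visualAngle_le_pi hs]
  exact visualAngle_upperHalf_eq_arctan_iff hx hy
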